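/- arXiv:1807.09310 — 3 statements merged into one kernel-verified Lean document; each statement's English description precedes it below -/
import Mathlib

section
/- Let S be an irreducible subset of Mat_n(F) (F algebraically closed) and let v ∈ F^n be a nonzero vector. If the subspace spanned by vectors M·v, where M ranges over words in S of length at most n−2 (including the identity), is not all of F^n, then the F-linear span of S contains a matrix whose minimal polynomial has degree n. -/
/-- Words in `S` of length at most `k` (the empty word gives the identity). -/
def wordsLe {F : Type*} [Field F] {m : Type*} [Fintype m] [DecidableEq m]
    (S : Set (Matrix m m F)) (k : ℕ) : Set (Matrix m m F) :=
  {M | ∃ l : List (Matrix m m F), l.length ≤ k ∧ (∀ a ∈ l, a ∈ S) ∧ M = l.prod}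

/-!
Let `W k` be the span of the images of `v` under words of length at most `k`. If `W (k + 1) = W k`,
then `W k` is `S`-invariant, hence everything by irreducibility; so the `W k` grow strictly until
they fill the space, and `W (n - 2) ≠ ⊤` forces `dim W k = k + 1` for `k ≤ n - 2`. For each such
`k` some element of `S` does not leave `W k` invariant, so, as a vector space over an infinite
field is not a finite union of proper subspaces, a single `B` in the span of `S` leaves none of
them invariant. Induction then identifies the Krylov spaces `span {v, B v, …, B ^ k v}` with the
`W k`, and a minimal polynomial of degree `k + 1 < n` would put `B ^ (k + 1) v` in the `k`-th one,
making it `B`-invariant.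
-/

open Module Matrix Polynomial

theorem Submodule.exists_mem_forall_notMem_of_forall_not_le {ι K M : Type*} [Field K]
    [Infinite K] [AddCommGroup M] [Module K M] [Finite ι] (T : Submodule K M)
    (p : ι → Submodule K M) (h : ∀ i, ¬T ≤ p i) : ∃ x ∈ T, ∀ i, x ∉ p i := by
  obtain ⟨x, hx⟩ := Submodule.exists_forall_notMem_of_forall_ne_top
    (fun i ↦ (p i).comap T.subtype) fun i hi ↦ h i fun y hy ↦ by
      simpa using Submodule.eq_top_iff'.mp hi ⟨y, hy⟩
  exact ⟨x, x.2, hx⟩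

theorem Submodule.finrank_add_le_finrank_of_lt_succ {K V : Type*} [Field K] [AddCommGroup V]
    [Module K V] [FiniteDimensional K V] {W : ℕ → Submodule K V} {i k : ℕ}
    (h : ∀ j < k, W (i + j) < W (i + j + 1)) : finrank K (W i) + k ≤ finrank K (W (i + k)) := by
  induction k with
  | zero => rfl
  | succ k ih =>
    have := Submodule.finrank_lt_finrank_of_lt (h k (by omega))
    have := ih fun j hj ↦ h j (by omega)
    rw [← add_assoc i]
    omega

section Matrices

variable {F : Type*} [Field F] {m : Type*} [Fintype m] [DecidableEq m]

theorem Matrix.exists_mulVec_eq_of_ne_zero {v : m → F} (hv : v ≠ 0) (w : m → F) :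
    ∃ M : Matrix m m F, M *ᵥ v = w := by
  have : Nontrivial (m → F) := nontrivial_of_ne v 0 hv
  obtain ⟨f, hf⟩ := IsSimpleModule.toSpanSingleton_surjective (Module.End F (m → F)) hv w
  exact ⟨f.toMatrix', by simpa [LinearMap.toMatrix'_mulVec] using hf⟩

def Submodule.matrixStabilizer (W : Submodule F (m → F)) : Subalgebra F (Matrix m m F) where
  carrier := {M | ∀ x ∈ W, M *ᵥ x ∈ W}
  mul_mem' hM hN x hx := by simpa [← mulVec_mulVec] using hM _ (hN x hx)
  add_mem' hM hN x hx := by simpa [add_mulVec] using W.add_mem (hM x hx) (hN x hx)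
  algebraMap_mem' c x hx := by
    simpa [Algebra.algebraMap_eq_smul_one, smul_mulVec] using W.smul_mem c hx

theorem Submodule.eq_top_of_subset_matrixStabilizer {S : Set (Matrix m m F)}
    (hirr : Algebra.adjoin F S = ⊤) {W : Submodule F (m → F)} (hW : W ≠ ⊥)
    (hS : S ⊆ W.matrixStabilizer) : W = ⊤ := by
  have htop : W.matrixStabilizer = ⊤ := top_le_iff.mp (hirr ▸ Algebra.adjoin_le hS)
  obtain ⟨u, hu, hu0⟩ := W.exists_mem_ne_zero_of_ne_bot hW
  refine eq_top_iff'.mpr fun w ↦ ?_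
  obtain ⟨M, rfl⟩ := exists_mulVec_eq_of_ne_zero hu0 w
  exact (htop ▸ Algebra.mem_top : M ∈ W.matrixStabilizer) u hu

def wordSpan (S : Set (Matrix m m F)) (v : m → F) (k : ℕ) : Submodule F (m → F) :=
  Submodule.span F {x | ∃ M ∈ wordsLe S k, x = M *ᵥ v}

section wordSpan

variable {S : Set (Matrix m m F)} {v : m → F}

theorem wordSpan_mono (S : Set (Matrix m m F)) (v : m → F) : Monotone (wordSpan S v) :=
  fun _ _ hkl ↦ Submodule.span_mono fun _ ⟨M, ⟨l, hl, hlS, hM⟩, hx⟩ ↦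
    ⟨M, ⟨l, hl.trans hkl, hlS, hM⟩, hx⟩

theorem self_mem_wordSpan (S : Set (Matrix m m F)) (v : m → F) (k : ℕ) : v ∈ wordSpan S v k :=
  Submodule.subset_span ⟨1, ⟨[], by simp⟩, by simp⟩

theorem mulVec_mem_wordSpan_succ {A : Matrix m m F} (hA : A ∈ S) {k : ℕ} {x : m → F}
    (hx : x ∈ wordSpan S v k) : A *ᵥ x ∈ wordSpan S v (k + 1) := by
  suffices wordSpan S v k ≤ (wordSpan S v (k + 1)).comap A.mulVecLin from this hx
  refine Submodule.span_le.mpr ?_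
  rintro _ ⟨M, ⟨l, hl, hlS, rfl⟩, rfl⟩
  refine Submodule.subset_span ⟨A * l.prod, ⟨A :: l, by simpa using hl, ?_, rfl⟩, ?_⟩
  · simpa using ⟨hA, hlS⟩
  · simp [mulVec_mulVec]

theorem mulVec_mem_wordSpan_succ_of_mem_span {B : Matrix m m F} (hB : B ∈ Submodule.span F S)
    {k : ℕ} {x : m → F} (hx : x ∈ wordSpan S v k) : B *ᵥ x ∈ wordSpan S v (k + 1) := by
  induction hB using Submodule.span_induction with
  | mem A hA => exact mulVec_mem_wordSpan_succ hA hx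
  | zero => simp
  | add A B _ _ hA hB => simpa [add_mulVec] using add_mem hA hB
  | smul c A _ hA => simpa [smul_mulVec] using Submodule.smul_mem _ c hA

theorem wordSpan_ne_bot (S : Set (Matrix m m F)) (hv : v ≠ 0) (k : ℕ) : wordSpan S v k ≠ ⊥ :=
  (wordSpan S v k).ne_bot_iff.mpr ⟨v, self_mem_wordSpan S v k, hv⟩

theorem one_le_finrank_wordSpan (S : Set (Matrix m m F)) (hv : v ≠ 0) (k : ℕ) :
    1 ≤ finrank F (wordSpan S v k) :=
  Submodule.one_le_finrank_iff.mpr (wordSpan_ne_bot S hv k)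

theorem wordSpan_eq_top_of_subset_matrixStabilizer (hirr : Algebra.adjoin F S = ⊤) (hv : v ≠ 0)
    {k : ℕ} (hS : S ⊆ (wordSpan S v k).matrixStabilizer) : wordSpan S v k = ⊤ :=
  Submodule.eq_top_of_subset_matrixStabilizer hirr (wordSpan_ne_bot S hv k) hS

theorem wordSpan_lt_succ (hirr : Algebra.adjoin F S = ⊤) (hv : v ≠ 0) {k : ℕ}
    (h : wordSpan S v k ≠ ⊤) : wordSpan S v k < wordSpan S v (k + 1) :=
  (wordSpan_mono S v k.le_succ).lt_of_not_ge fun hle ↦ h <|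
    wordSpan_eq_top_of_subset_matrixStabilizer hirr hv fun _ hA _ hx ↦
      hle (mulVec_mem_wordSpan_succ hA hx)

theorem finrank_wordSpan (hirr : Algebra.adjoin F S = ⊤) (hv : v ≠ 0) {d : ℕ}
    (hd : Fintype.card m = d + 2) (h : wordSpan S v d ≠ ⊤) {k : ℕ} (hk : k ≤ d) :
    finrank F (wordSpan S v k) = k + 1 := by
  have hlt : ∀ j < d, wordSpan S v j < wordSpan S v (j + 1) := fun j hj ↦
    wordSpan_lt_succ hirr hv fun htop ↦ h (top_le_iff.mp (htop ▸ wordSpan_mono S v hj.le))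
  have hlow := Submodule.finrank_add_le_finrank_of_lt_succ (W := wordSpan S v) (i := 0) (k := k)
    fun j hj ↦ hlt _ (by omega)
  have hup := Submodule.finrank_add_le_finrank_of_lt_succ (W := wordSpan S v) (i := k)
    (k := d - k) fun j hj ↦ hlt _ (by omega)
  have htop := Submodule.finrank_lt h
  have := one_le_finrank_wordSpan S hv 0
  rw [zero_add] at hlow
  rw [Nat.add_sub_cancel' hk] at hup
  rw [Module.finrank_fintype_fun_eq_card] at htop
  omega

end wordSpan

theorem Matrix.natDegree_minpoly_le (M : Matrix m m F) :
    (minpoly F M).natDegree ≤ Fintype.card m :=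
  M.charpoly_natDegree_eq_dim ▸
    natDegree_le_of_dvd M.minpoly_dvd_charpoly M.charpoly_monic.ne_zero

def krylov (B : Matrix m m F) (v : m → F) (k : ℕ) : Submodule F (m → F) :=
  Submodule.span F ((fun i ↦ (B ^ i) *ᵥ v) '' Set.Iic k)

section krylov

variable {B : Matrix m m F} {v : m → F}

theorem pow_mulVec_mem_krylov {i k : ℕ} (hi : i ≤ k) : (B ^ i) *ᵥ v ∈ krylov B v k :=
  Submodule.subset_span ⟨i, hi, rfl⟩

theorem krylov_zero (B : Matrix m m F) (v : m → F) : krylov B v 0 = F ∙ v := by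
  rw [krylov, show Set.Iic 0 = {0} from Set.Iic_bot, Set.image_singleton, pow_zero, one_mulVec]

theorem krylov_succ (B : Matrix m m F) (v : m → F) (k : ℕ) :
    krylov B v (k + 1) = krylov B v k ⊔ F ∙ (B ^ (k + 1)) *ᵥ v := by
  rw [krylov, ← Order.succ_eq_add_one, Order.Iic_succ, Set.image_insert_eq,
    Submodule.span_insert, sup_comm, Order.succ_eq_add_one, krylov]

theorem mulVec_mem_krylov_succ {k : ℕ} {x : m → F} (hx : x ∈ krylov B v k) :
    B *ᵥ x ∈ krylov B v (k + 1) := by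
  suffices krylov B v k ≤ (krylov B v (k + 1)).comap B.mulVecLin from this hx
  refine Submodule.span_le.mpr ?_
  rintro _ ⟨i, hi, rfl⟩
  simpa [mulVec_mulVec, ← pow_succ'] using pow_mulVec_mem_krylov (B := B) (v := v)
    (Nat.succ_le_succ hi)

theorem mem_matrixStabilizer_krylov {k : ℕ} (h : (B ^ (k + 1)) *ᵥ v ∈ krylov B v k) :
    B ∈ (krylov B v k).matrixStabilizer := by
  have hstable : krylov B v (k + 1) = krylov B v k := by
    rw [krylov_succ, sup_eq_left, Submodule.span_singleton_le_iff_mem]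
    exact h
  exact fun x hx ↦ hstable ▸ mulVec_mem_krylov_succ hx

theorem pow_mulVec_mem_krylov_of_aeval_eq_zero {p : F[X]} (hp : p.Monic) (hpB : aeval B p = 0)
    {k : ℕ} (hdeg : p.natDegree = k + 1) : (B ^ (k + 1)) *ᵥ v ∈ krylov B v k := by
  rw [aeval_eq_sum_range, hdeg, Finset.sum_range_succ, ← hdeg, hp.coeff_natDegree, one_smul,
    hdeg, add_eq_zero_iff_neg_eq'] at hpB
  rw [← neg_neg (B ^ (k + 1)), hpB, neg_mulVec, Matrix.sum_mulVec]
  refine neg_mem (Submodule.sum_mem _ fun i hi ↦ ?_)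
  rw [smul_mulVec]
  exact Submodule.smul_mem _ _ (pow_mulVec_mem_krylov (Nat.lt_succ_iff.mp (Finset.mem_range.mp hi)))

theorem krylov_le_wordSpan {S : Set (Matrix m m F)} (hB : B ∈ Submodule.span F S) (k : ℕ) :
    krylov B v k ≤ wordSpan S v k := by
  have hpow : ∀ i, (B ^ i) *ᵥ v ∈ wordSpan S v i := by
    intro i
    induction i with
    | zero => simpa using self_mem_wordSpan S v 0
    | succ i ih => simpa [pow_succ', ← mulVec_mulVec] using
        mulVec_mem_wordSpan_succ_of_mem_span hB ih
  exact Submodule.span_le.mpr fun _ ⟨i, hi, hx⟩ ↦ hx ▸ wordSpan_mono S v hi (hpow i)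

end krylov

theorem krylov_eq_wordSpan {S : Set (Matrix m m F)} {B : Matrix m m F}
    (hB : B ∈ Submodule.span F S) {v : m → F} (hv : v ≠ 0) {d : ℕ}
    (hdim : ∀ k ≤ d, finrank F (wordSpan S v k) = k + 1)
    (hB_not : ∀ k ≤ d, B ∉ (wordSpan S v k).matrixStabilizer) {k : ℕ} (hk : k ≤ d) :
    krylov B v k = wordSpan S v k := by
  induction k with
  | zero =>
    refine Submodule.eq_of_le_of_finrank_le (krylov_le_wordSpan hB 0) ?_
    rw [hdim 0 hk, krylov_zero, finrank_span_singleton hv]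
  | succ k ih =>
    have ih := ih (by omega)
    have hgrow : krylov B v k < krylov B v (k + 1) := by
      rw [krylov_succ]
      refine left_lt_sup.mpr fun hle ↦ hB_not k (by omega) ?_
      exact ih ▸ mem_matrixStabilizer_krylov (Submodule.span_singleton_le_iff_mem _ _ |>.mp hle)
    refine Submodule.eq_of_le_of_finrank_le (krylov_le_wordSpan hB _) ?_
    have := Submodule.finrank_lt_finrank_of_lt hgrow
    rw [ih, hdim k (by omega)] at this
    rw [hdim (k + 1) hk]
    exact this

end Matrices

theorem stmt_8 {F : Type*} [Field F] [IsAlgClosed F] {n : ℕ}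
    (S : Set (Matrix (Fin n) (Fin n) F))
    (hirr : Algebra.adjoin F S = (⊤ : Subalgebra F (Matrix (Fin n) (Fin n) F)))
    (v : Fin n → F) (hv : v ≠ 0)
    (h : Submodule.span F {x : Fin n → F | ∃ M ∈ wordsLe S (n - 2), x = M.mulVec v}
        ≠ ⊤) :
    ∃ B ∈ Submodule.span F S, (minpoly F B).natDegree = n := by
  change wordSpan S v (n - 2) ≠ ⊤ at h
  obtain ⟨d, rfl⟩ : ∃ d, n = d + 2 := by
    have := Submodule.finrank_lt h
    have := one_le_finrank_wordSpan S hv (n - 2)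
    rw [finrank_fin_fun] at *
    exact ⟨n - 2, by omega⟩
  have hdim := fun k ↦ finrank_wordSpan hirr hv (Fintype.card_fin _) h (k := k)
  have hnot_le : ∀ j : Fin (d + 1),
      ¬Submodule.span F S ≤ Subalgebra.toSubmodule (wordSpan S v j).matrixStabilizer := by
    intro j hle
    have htop := wordSpan_eq_top_of_subset_matrixStabilizer hirr hv
      fun A hA ↦ hle (Submodule.subset_span hA)
    exact h (top_le_iff.mp (htop ▸ wordSpan_mono S v (by omega)))
  obtain ⟨B, hB, hB_not⟩ := (Submodule.span F S).exists_mem_forall_notMem_of_forall_not_le _ hnot_le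
  refine ⟨B, hB, le_antisymm (by simpa using B.natDegree_minpoly_le) ?_⟩
  by_contra! hlt
  obtain ⟨k, hk⟩ := Nat.exists_eq_succ_of_ne_zero (minpoly.natDegree_pos B.isIntegral).ne'
  have hstab := mem_matrixStabilizer_krylov (pow_mulVec_mem_krylov_of_aeval_eq_zero (v := v)
    (minpoly.monic B.isIntegral) (minpoly.aeval F B) hk)
  rw [krylov_eq_wordSpan hB hv hdim (fun j hj ↦ hB_not ⟨j, by omega⟩) (by omega)] at hstab
  exact hB_not ⟨k, by omega⟩ hstab
end

section
/- Let A be a 5×5 matrix over an algebraically closed field F whose minimal polynomial has degree 3. Then the F-linear span of I, A, A² contains a nonzero rank-one matrix. -/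
/-!
Factor the minimal polynomial as `(X - x)(X - y)(X - z)` and put `Bᵣ = A - r`. No product of
two of these linear factors annihilates `A`, so `BₓB_y`, `BₓB_z`, `B_yB_z` all have positive rank.
Since the `Bᵣ` commute and `BₓB_yB_z = 0`, the Frobenius rank inequality gives
`rk(BₓB_y) + rk(B_yB_z) ≤ rk B_y` and `rk(BₓB_y) + rk(BₓB_z) ≤ rk Bₓ`, while Sylvester's inequality
gives `rk Bₓ + rk B_y ≤ 5 + rk(BₓB_y)`. Hence the three ranks sum to at most `5`, so one of them
is `1`, and that product is a quadratic polynomial in `A`.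
-/

open Polynomial Module

section Frobenius

variable {K U V W T : Type*} [Field K] [AddCommGroup U] [Module K U] [AddCommGroup V]
  [Module K V] [AddCommGroup W] [Module K W] [AddCommGroup T] [Module K T]

theorem LinearMap.finrank_range_comp_add_finrank_ker_inf_range [FiniteDimensional K V]
    (f : V →ₗ[K] W) (g : U →ₗ[K] V) :
    finrank K (range (f ∘ₗ g)) + finrank K ↥(ker f ⊓ range g) = finrank K (range g) := by
  have h := (f.domRestrict (range g)).finrank_range_add_finrank_ker
  rwa [range_domRestrict, ← range_comp, ker_domRestrict,
    ← Submodule.finrank_map_subtype_eq, Submodule.map_comap_subtype, inf_comm] at h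

theorem LinearMap.finrank_range_comp_add_finrank_range_comp_le [FiniteDimensional K V]
    (f : V →ₗ[K] W) (g : U →ₗ[K] V) (h : T →ₗ[K] U) :
    finrank K (range (f ∘ₗ g)) + finrank K (range (g ∘ₗ h)) ≤
      finrank K (range g) + finrank K (range (f ∘ₗ g ∘ₗ h)) := by
  have hg := f.finrank_range_comp_add_finrank_ker_inf_range g
  have hgh := f.finrank_range_comp_add_finrank_ker_inf_range (g ∘ₗ h)
  have hle : finrank K ↥(ker f ⊓ range (g ∘ₗ h)) ≤ finrank K ↥(ker f ⊓ range g) :=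
    Submodule.finrank_mono (inf_le_inf_left _ (range_comp_le_range h g))
  omega

end Frobenius

namespace Matrix

variable {K l m n o : Type*} [Field K] [Fintype m] [Fintype n] [Fintype o]

theorem rank_mul_add_rank_mul_le (X : Matrix l m K) (Y : Matrix m n K) (Z : Matrix n o K) :
    (X * Y).rank + (Y * Z).rank ≤ Y.rank + (X * Y * Z).rank := by
  have h := X.mulVecLin.finrank_range_comp_add_finrank_range_comp_le Y.mulVecLin Z.mulVecLin
  unfold rank
  rw [mulVecLin_mul, mulVecLin_mul, mulVecLin_mul, mulVecLin_mul]
  exact h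

theorem rank_add_rank_le_card_add_rank_mul [DecidableEq m] (X : Matrix l m K)
    (Z : Matrix m o K) : X.rank + Z.rank ≤ Fintype.card m + (X * Z).rank := by
  simpa [rank_one] using rank_mul_add_rank_mul_le X 1 Z

theorem rank_pos_of_ne_zero {M : Matrix l n K} (hM : M ≠ 0) : 0 < M.rank := by
  refine Nat.pos_of_ne_zero fun h ↦ hM (ext_iff_mulVec.mpr fun v ↦ ?_)
  rw [rank, Submodule.finrank_eq_zero, LinearMap.range_eq_bot] at h
  simpa using LinearMap.congr_fun h v

theorem rank_mul_add_rank_mul_add_rank_mul_le_card [DecidableEq n] {B₁ B₂ B₃ : Matrix n n K}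
    (h₁₂ : Commute B₁ B₂) (h : B₁ * B₂ * B₃ = 0) :
    (B₁ * B₂).rank + (B₁ * B₃).rank + (B₂ * B₃).rank ≤ Fintype.card n := by
  have frobenius₂ := rank_mul_add_rank_mul_le B₁ B₂ B₃
  have frobenius₁ := rank_mul_add_rank_mul_le B₂ B₁ B₃
  rw [h, rank_zero] at frobenius₂
  rw [← h₁₂.eq, h, rank_zero] at frobenius₁
  have sylvester := rank_add_rank_le_card_add_rank_mul B₁ B₂
  omega

end Matrix

theorem Polynomial.exists_eq_X_sub_C_mul_X_sub_C_mul_X_sub_C {F : Type*} [Field F]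
    [IsAlgClosed F] {p : F[X]} (hp : p.Monic) (h3 : p.natDegree = 3) :
    ∃ x y z : F, p = (X - C x) * (X - C y) * (X - C z) := by
  have hsplit := IsAlgClosed.splits p
  obtain ⟨x, y, z, hroots⟩ :=
    Multiset.card_eq_three.mp ((splits_iff_card_roots.mp hsplit).trans h3)
  refine ⟨x, y, z, ?_⟩
  rw [hsplit.eq_prod_roots_of_monic hp, hroots]
  simp [mul_assoc]

theorem Polynomial.aeval_X_sub_C_mul_X_sub_C {F B : Type*} [Field F] [Ring B] [Algebra F B]
    (a : B) (r s : F) :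
    aeval a ((X - C r) * (X - C s)) = (r * s) • (1 : B) + (-(r + s)) • a + (1 : F) • (a * a) := by
  simp only [map_mul, map_sub, aeval_X, aeval_C, Algebra.algebraMap_eq_smul_one, sub_mul, mul_sub,
    smul_mul_assoc, mul_smul_comm, one_mul, mul_one, smul_smul]
  module

theorem minpoly.aeval_ne_zero_of_natDegree_lt {F B : Type*} [Field F] [Ring B] [Algebra F B]
    {a : B} {p : F[X]} (hp : p ≠ 0) (hdeg : p.natDegree < (minpoly F a).natDegree) :
    Polynomial.aeval a p ≠ 0 := fun h ↦
  (natDegree_le_natDegree (minpoly.degree_le_of_ne_zero F a hp h)).not_gt hdeg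

theorem stmt_14 {F : Type*} [Field F] [IsAlgClosed F]
    (A : Matrix (Fin 5) (Fin 5) F) (h : (minpoly F A).natDegree = 3) :
    ∃ a b c : F,
      (a • (1 : Matrix (Fin 5) (Fin 5) F) + b • A + c • (A * A)).rank = 1 := by
  obtain ⟨x, y, z, hm⟩ :=
    exists_eq_X_sub_C_mul_X_sub_C_mul_X_sub_C (minpoly.monic (.of_finite F A)) h
  let B : F → Matrix (Fin 5) (Fin 5) F := fun r ↦ aeval A (X - C r)
  have hzero : B x * B y * B z = 0 := by
    simpa only [B, hm, map_mul] using minpoly.aeval F A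
  have hpos (r s : F) : 0 < (B r * B s).rank := by
    refine Matrix.rank_pos_of_ne_zero ?_
    rw [← map_mul]
    refine minpoly.aeval_ne_zero_of_natDegree_lt
      (mul_ne_zero (X_sub_C_ne_zero r) (X_sub_C_ne_zero s)) ?_
    rw [natDegree_mul (X_sub_C_ne_zero r) (X_sub_C_ne_zero s), h]
    simp
  have hcomm : Commute (B x) (B y) := (Commute.all _ _).map (aeval A)
  have hsum := Matrix.rank_mul_add_rank_mul_add_rank_mul_le_card hcomm hzero
  obtain ⟨r, s, hrs⟩ : ∃ r s, (B r * B s).rank = 1 := by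
    have := hpos x y; have := hpos x z; have := hpos y z
    simp only [Fintype.card_fin] at hsum
    by_contra! hne
    have := hne x y; have := hne x z; have := hne y z
    omega
  refine ⟨r * s, -(r + s), 1, ?_⟩
  rwa [← aeval_X_sub_C_mul_X_sub_C, map_mul]
end

section
/- Let A be a block upper-triangular matrix algebra: every element of A has the form [[A₁₁, A₁₂],[0, A₂₂]] with A₁₁ of fixed size p×p. Let A₁ and A₂ be the algebras of all blocks A₁₁ and A₂₂, respectively, of elements of A. Then ℓ(A) ≤ ℓ(A₁) + ℓ(A₂) + 1. -/
/-- The length of a generating set: the least `k` such that the span of words of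
length at most `k` equals the unital subalgebra generated by `S`. -/
noncomputable def matLen (F : Type*) [Field F] {m : Type*} [Fintype m] [DecidableEq m]
    (S : Set (Matrix m m F)) : ℕ :=
  sInf {k | Submodule.span F (wordsLe S k) = Subalgebra.toSubmodule (Algebra.adjoin F S)}

/-- The length of a matrix algebra with carrier set `T`: the supremum of the lengths of
its generating subsets. -/
noncomputable def algLen (F : Type*) [Field F] {m : Type*} [Fintype m] [DecidableEq m]
    (T : Set (Matrix m m F)) : ℕ :=
  sSup {k | ∃ S : Set (Matrix m m F), (Algebra.adjoin F S : Set (Matrix m m F)) = T ∧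
    k = matLen F S}

/-!
Let `S` generate `𝒜` and let `k₁`, `k₂` be the lengths of the images of `S` in the two diagonal
blocks. Split a word of length `k₁ + k₂ + 2` as `u v` with `|u| = k₁ + 1` and `|v| ≤ k₂ + 1`.
There are linear combinations `U`, `V` of words of length at most `k₁`, resp. `k₂`, with the same
first diagonal block as `u`, resp. the same second diagonal block as `v`. A block upper-triangular
matrix with vanishing first block times one with vanishing second block is zero, so
`(u - U) (v - V) = 0`, and `u v = U v + u V - U V` is a combination of words of length at most
`k₁ + k₂ + 1`. Once the words of length `N + 1` lie in the span of the shorter ones, so do all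
longer words, hence `ℓ(S) ≤ k₁ + k₂ + 1`.
-/

open Submodule

theorem Submodule.exists_le_finrank_succ_le {K V : Type*} [DivisionRing K] [AddCommGroup V]
    [Module K V] [FiniteDimensional K V] {f : ℕ → Submodule K V} (hf : Monotone f) :
    ∃ n ≤ Module.finrank K V, f (n + 1) ≤ f n := by
  by_contra! h
  have hgrow : ∀ n ≤ Module.finrank K V + 1, n ≤ Module.finrank K (f n) := by
    intro n hn
    induction n with
    | zero => exact Nat.zero_le _
    | succ n ih =>
      have hlt : f n < f (n + 1) := (hf n.le_succ).lt_of_not_ge (h n (by omega))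
      exact (ih (by omega)).trans_lt (Submodule.finrank_lt_finrank_of_lt hlt)
  have := (hgrow _ le_rfl).trans (f (Module.finrank K V + 1)).finrank_le
  omega

theorem Algebra.toSubmodule_adjoin_le {R A : Type*} [CommSemiring R] [Semiring A] [Algebra R A]
    {S : Set A} {V : Submodule R A} (h1 : 1 ∈ V) (hmul : ∀ s ∈ S, ∀ v ∈ V, s * v ∈ V) :
    Subalgebra.toSubmodule (Algebra.adjoin R S) ≤ V := by
  rw [Algebra.adjoin_eq_span, span_le]
  intro x hx
  induction hx using Submonoid.closure_induction_left with
  | one => exact h1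
  | mul_left s hs v _ hv => exact hmul s hs v hv

section Length

variable {F : Type*} [Field F] {ι : Type*} [Fintype ι] [DecidableEq ι]
  {S : Set (Matrix ι ι F)}

theorem wordsLe_mono {k k' : ℕ} (h : k ≤ k') : wordsLe S k ⊆ wordsLe S k' :=
  fun _ ⟨l, hl, hS, hprod⟩ => ⟨l, hl.trans h, hS, hprod⟩

theorem one_mem_wordsLe (k : ℕ) : (1 : Matrix ι ι F) ∈ wordsLe S k :=
  ⟨[], by simp, by simp, by simp⟩

theorem mul_mem_wordsLe {a b : ℕ} {x y : Matrix ι ι F} (hx : x ∈ wordsLe S a)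
    (hy : y ∈ wordsLe S b) : x * y ∈ wordsLe S (a + b) := by
  obtain ⟨l₁, hl₁, hS₁, rfl⟩ := hx
  obtain ⟨l₂, hl₂, hS₂, rfl⟩ := hy
  refine ⟨l₁ ++ l₂, by simp only [List.length_append]; omega, ?_, List.prod_append.symm⟩
  simpa only [List.mem_append, or_imp, forall_and] using ⟨hS₁, hS₂⟩

theorem mul_mem_span_wordsLe {a b : ℕ} {x y : Matrix ι ι F} (hx : x ∈ span F (wordsLe S a))
    (hy : y ∈ span F (wordsLe S b)) : x * y ∈ span F (wordsLe S (a + b)) := by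
  have hxy := mul_mem_mul hx hy
  rw [span_mul_span] at hxy
  refine span_mono ?_ hxy
  rintro _ ⟨x, hx, y, hy, rfl⟩
  exact mul_mem_wordsLe hx hy

theorem wordsLe_subset_adjoin (k : ℕ) :
    wordsLe S k ⊆ (Algebra.adjoin F S : Set (Matrix ι ι F)) := by
  rintro _ ⟨l, -, hS, rfl⟩
  exact Subalgebra.list_prod_mem _ fun a ha => Algebra.subset_adjoin (hS a ha)

theorem span_wordsLe_le_adjoin (k : ℕ) :
    span F (wordsLe S k) ≤ Subalgebra.toSubmodule (Algebra.adjoin F S) :=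
  span_le.2 (wordsLe_subset_adjoin k)

theorem span_wordsLe_eq_adjoin_of_subset {k : ℕ} (h : wordsLe S (k + 1) ⊆ span F (wordsLe S k)) :
    span F (wordsLe S k) = Subalgebra.toSubmodule (Algebra.adjoin F S) := by
  refine le_antisymm (span_wordsLe_le_adjoin k) (Algebra.toSubmodule_adjoin_le
    (subset_span (one_mem_wordsLe k)) fun s hs v hv => ?_)
  have hs' : s ∈ span F (wordsLe S 1) := subset_span ⟨[s], by simp, by simpa using hs, by simp⟩
  exact span_le.2 h (add_comm 1 k ▸ mul_mem_span_wordsLe hs' hv)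

theorem matLen_le_of_subset {k : ℕ} (h : wordsLe S (k + 1) ⊆ span F (wordsLe S k)) :
    matLen F S ≤ k :=
  Nat.sInf_le (span_wordsLe_eq_adjoin_of_subset h)

theorem exists_le_finrank_wordsLe_succ_subset :
    ∃ k ≤ Module.finrank F (Matrix ι ι F), wordsLe S (k + 1) ⊆ span F (wordsLe S k) := by
  obtain ⟨k, hk, hle⟩ := Submodule.exists_le_finrank_succ_le
    (f := fun k => span F (wordsLe S k)) fun _ _ h => span_mono (wordsLe_mono h)
  exact ⟨k, hk, subset_span.trans hle⟩

theorem matLen_le_finrank : matLen F S ≤ Module.finrank F (Matrix ι ι F) :=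
  let ⟨_, hk, h⟩ := exists_le_finrank_wordsLe_succ_subset (S := S)
  (matLen_le_of_subset h).trans hk

theorem span_wordsLe_matLen :
    span F (wordsLe S (matLen F S)) = Subalgebra.toSubmodule (Algebra.adjoin F S) := by
  obtain ⟨k, -, h⟩ := exists_le_finrank_wordsLe_succ_subset (S := S)
  exact Nat.sInf_mem (s := {k | span F (wordsLe S k) = _}) ⟨k, span_wordsLe_eq_adjoin_of_subset h⟩

theorem span_wordsLe_eq_adjoin {k : ℕ} (hk : matLen F S ≤ k) :
    span F (wordsLe S k) = Subalgebra.toSubmodule (Algebra.adjoin F S) :=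
  le_antisymm (span_wordsLe_le_adjoin k)
    (span_wordsLe_matLen (S := S) ▸ span_mono (wordsLe_mono hk))

theorem matLen_le_algLen {T : Set (Matrix ι ι F)}
    (hS : (Algebra.adjoin F S : Set (Matrix ι ι F)) = T) : matLen F S ≤ algLen F T :=
  le_csSup ⟨_, by rintro _ ⟨S', -, rfl⟩; exact matLen_le_finrank⟩ ⟨S, hS, rfl⟩

theorem algLen_le {T : Set (Matrix ι ι F)} {c : ℕ}
    (h : ∀ S : Set (Matrix ι ι F), (Algebra.adjoin F S : Set (Matrix ι ι F)) = T →
      matLen F S ≤ c) : algLen F T ≤ c :=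
  csSup_le' (by rintro _ ⟨S, hS, rfl⟩; exact h S hS)

end Length

section Image

variable {F : Type*} [Field F] {ι κ : Type*} [Fintype ι] [DecidableEq ι] [Fintype κ]
  [DecidableEq κ] {B : Subalgebra F (Matrix ι ι F)} {S : Set (Matrix ι ι F)}
  {f : Matrix ι ι F →ₗ[F] Matrix κ κ F}

theorem map_list_prod_of_mul (hf₁ : f 1 = 1) (hfmul : ∀ x ∈ B, ∀ y ∈ B, f (x * y) = f x * f y)
    {l : List (Matrix ι ι F)} (hl : ∀ a ∈ l, a ∈ B) : f l.prod = (l.map f).prod := by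
  induction l with
  | nil => exact hf₁
  | cons a t ih =>
    have ht : ∀ b ∈ t, b ∈ B := fun b hb => hl b (List.mem_cons_of_mem a hb)
    rw [List.prod_cons, hfmul a (hl a List.mem_cons_self) _ (Subalgebra.list_prod_mem B ht),
      ih ht, List.map_cons, List.prod_cons]

theorem image_wordsLe (hSB : S ⊆ B) (hf₁ : f 1 = 1)
    (hfmul : ∀ x ∈ B, ∀ y ∈ B, f (x * y) = f x * f y) (k : ℕ) :
    f '' wordsLe S k = wordsLe (f '' S) k := by
  ext M
  constructor
  · rintro ⟨_, ⟨l, hlen, hl, rfl⟩, rfl⟩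
    refine ⟨l.map f, by simpa using hlen, ?_,
      map_list_prod_of_mul hf₁ hfmul fun a ha => hSB (hl a ha)⟩
    simpa using fun a ha => Set.mem_image_of_mem f (hl a ha)
  · rintro ⟨l, hlen, hl, rfl⟩
    set l' := l.map (Function.invFunOn f S)
    have hl' : ∀ a ∈ l', a ∈ S := by
      simpa [l'] using fun a ha => Function.invFunOn_mem (hl a ha)
    have hmap : l'.map f = l := by
      rw [List.map_map]
      exact List.map_congr_left (fun a ha => Function.invFunOn_eq (hl a ha)) |>.trans l.map_id
    refine ⟨l'.prod, ⟨l', by simpa [l'] using hlen, hl', rfl⟩, ?_⟩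
    rw [map_list_prod_of_mul hf₁ hfmul fun a ha => hSB (hl' a ha), hmap]

theorem map_span_wordsLe (hSB : S ⊆ B) (hf₁ : f 1 = 1)
    (hfmul : ∀ x ∈ B, ∀ y ∈ B, f (x * y) = f x * f y) (k : ℕ) :
    (span F (wordsLe S k)).map f = span F (wordsLe (f '' S) k) := by
  rw [map_span, image_wordsLe hSB hf₁ hfmul]

theorem adjoin_image (hSB : S ⊆ B) (hf₁ : f 1 = 1)
    (hfmul : ∀ x ∈ B, ∀ y ∈ B, f (x * y) = f x * f y) :
    (Algebra.adjoin F (f '' S) : Set (Matrix κ κ F)) = f '' Algebra.adjoin F S := by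
  set k := max (matLen F S) (matLen F (f '' S))
  have h := map_span_wordsLe hSB hf₁ hfmul k
  rw [span_wordsLe_eq_adjoin (le_max_left ..), span_wordsLe_eq_adjoin (le_max_right ..)] at h
  rw [← Subalgebra.coe_toSubmodule, ← h, map_coe, Subalgebra.coe_toSubmodule]

theorem exists_mem_span_wordsLe_apply_eq (hSB : S ⊆ B) (hf₁ : f 1 = 1)
    (hfmul : ∀ x ∈ B, ∀ y ∈ B, f (x * y) = f x * f y) {x : Matrix ι ι F}
    (hx : x ∈ Algebra.adjoin F S) :
    ∃ y ∈ span F (wordsLe S (matLen F (f '' S))), f y = f x := by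
  have hfx : f x ∈ span F (wordsLe (f '' S) (matLen F (f '' S))) := by
    rw [span_wordsLe_matLen, Subalgebra.mem_toSubmodule, ← SetLike.mem_coe,
      adjoin_image hSB hf₁ hfmul]
    exact Set.mem_image_of_mem f hx
  rwa [← map_span_wordsLe hSB hf₁ hfmul, mem_map] at hfx

end Image

theorem matLen_le_matLen_image_add_matLen_image_add_one {F : Type*} [Field F]
    {ι κ₁ κ₂ : Type*} [Fintype ι] [DecidableEq ι] [Fintype κ₁] [DecidableEq κ₁] [Fintype κ₂]
    [DecidableEq κ₂] {B : Subalgebra F (Matrix ι ι F)}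
    {S : Set (Matrix ι ι F)} (hSB : S ⊆ B)
    {f₁ : Matrix ι ι F →ₗ[F] Matrix κ₁ κ₁ F} (hf₁ : f₁ 1 = 1)
    (hf₁mul : ∀ x ∈ B, ∀ y ∈ B, f₁ (x * y) = f₁ x * f₁ y)
    {f₂ : Matrix ι ι F →ₗ[F] Matrix κ₂ κ₂ F} (hf₂ : f₂ 1 = 1)
    (hf₂mul : ∀ x ∈ B, ∀ y ∈ B, f₂ (x * y) = f₂ x * f₂ y)
    (hker : ∀ x ∈ B, ∀ y ∈ B, f₁ x = 0 → f₂ y = 0 → x * y = 0) :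
    matLen F S ≤ matLen F (f₁ '' S) + matLen F (f₂ '' S) + 1 := by
  set k₁ := matLen F (f₁ '' S)
  set k₂ := matLen F (f₂ '' S)
  have hspanB : ∀ {k x}, x ∈ span F (wordsLe S k) → x ∈ B :=
    fun hx => Algebra.adjoin_le hSB (span_wordsLe_le_adjoin _ hx)
  have hmul : ∀ {a b x y}, x ∈ span F (wordsLe S a) → y ∈ span F (wordsLe S b) →
      a + b ≤ k₁ + k₂ + 1 → x * y ∈ span F (wordsLe S (k₁ + k₂ + 1)) :=
    fun hx hy hab => span_mono (wordsLe_mono hab) (mul_mem_span_wordsLe hx hy)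
  apply matLen_le_of_subset
  rintro _ ⟨l, hlen, hl, rfl⟩
  rw [← List.take_append_drop (k₁ + 1) l, List.prod_append]
  have hu : (l.take (k₁ + 1)).prod ∈ span F (wordsLe S (k₁ + 1)) :=
    subset_span ⟨_, List.length_take_le .., fun a ha => hl a (List.mem_of_mem_take ha), rfl⟩
  have hv : (l.drop (k₁ + 1)).prod ∈ span F (wordsLe S (k₂ + 1)) :=
    subset_span ⟨_, by simp only [List.length_drop]; omega,
      fun a ha => hl a (List.mem_of_mem_drop ha), rfl⟩
  set u := (l.take (k₁ + 1)).prod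
  set v := (l.drop (k₁ + 1)).prod
  -- `U`, `V` are combinations of words of length `≤ k₁`, `≤ k₂` that agree with `u` on the
  -- first diagonal block and with `v` on the second one
  obtain ⟨U, hU, hfU⟩ :=
    exists_mem_span_wordsLe_apply_eq hSB hf₁ hf₁mul (span_wordsLe_le_adjoin _ hu)
  obtain ⟨V, hV, hfV⟩ :=
    exists_mem_span_wordsLe_apply_eq hSB hf₂ hf₂mul (span_wordsLe_le_adjoin _ hv)
  have hzero : (u - U) * (v - V) = 0 :=
    hker _ (sub_mem (hspanB hu) (hspanB hU)) _ (sub_mem (hspanB hv) (hspanB hV))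
      (by rw [map_sub, hfU, sub_self]) (by rw [map_sub, hfV, sub_self])
  have hexpand : u * v = U * v + u * V - U * V := by
    rw [← sub_eq_zero, ← hzero]
    noncomm_ring
  rw [hexpand]
  exact sub_mem (add_mem (hmul hU hv (by omega)) (hmul hu hV (by omega))) (hmul hU hV (by omega))

namespace Matrix

variable {m n : Type*}

def submatrixLinearMap (R : Type*) [Semiring R] {k l : Type*} (r : k → m) (c : l → n) :
    Matrix m n R →ₗ[R] Matrix k l R where
  toFun M := M.submatrix r c
  map_add' _ _ := rfl
  map_smul' _ _ := rfl

variable {R : Type*}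

theorem blockTriangular_isRight_iff [Zero R] {M : Matrix (m ⊕ n) (m ⊕ n) R} :
    M.BlockTriangular Sum.isRight ↔ ∀ i j, M (Sum.inr i) (Sum.inl j) = 0 := by
  refine ⟨fun h i j => h (by simp), fun h => ?_⟩
  rintro (i | i) (j | j) hij
  all_goals simp only [Sum.isRight_inl, Sum.isRight_inr] at hij
  exacts [absurd hij (by decide), absurd hij (by decide), h i j, absurd hij (by decide)]

variable [Fintype m] [Fintype n] [NonUnitalNonAssocSemiring R] {M N : Matrix (m ⊕ n) (m ⊕ n) R}

theorem BlockTriangular.submatrix_inl_mul (hN : N.BlockTriangular Sum.isRight) :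
    (M * N).submatrix Sum.inl Sum.inl =
      M.submatrix Sum.inl Sum.inl * N.submatrix Sum.inl Sum.inl := by
  ext i j
  simp [mul_apply, Fintype.sum_sum_type, blockTriangular_isRight_iff.1 hN]

theorem BlockTriangular.submatrix_inr_mul (hM : M.BlockTriangular Sum.isRight) :
    (M * N).submatrix Sum.inr Sum.inr =
      M.submatrix Sum.inr Sum.inr * N.submatrix Sum.inr Sum.inr := by
  ext i j
  simp [mul_apply, Fintype.sum_sum_type, blockTriangular_isRight_iff.1 hM]

theorem BlockTriangular.mul_eq_zero (hM : M.BlockTriangular Sum.isRight)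
    (hN : N.BlockTriangular Sum.isRight) (h₁ : M.submatrix Sum.inl Sum.inl = 0)
    (h₂ : N.submatrix Sum.inr Sum.inr = 0) : M * N = 0 := by
  have hM₁ : ∀ i j, M i (Sum.inl j) = 0 := by
    rintro (i | i) j
    exacts [congr_fun₂ h₁ i j, blockTriangular_isRight_iff.1 hM i j]
  have hN₂ : ∀ i j, N (Sum.inr i) j = 0 := by
    rintro i (j | j)
    exacts [blockTriangular_isRight_iff.1 hN i j, congr_fun₂ h₂ i j]
  ext i j
  simp [mul_apply, Fintype.sum_sum_type, hM₁, hN₂]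

end Matrix

open Matrix in
theorem matLen_le_of_blockTriangular {F : Type*} [Field F] {m n : Type*} [Fintype m]
    [DecidableEq m] [Fintype n] [DecidableEq n] {S : Set (Matrix (m ⊕ n) (m ⊕ n) F)}
    (hS : ∀ M ∈ S, M.BlockTriangular Sum.isRight) :
    matLen F S ≤ matLen F ((·.submatrix Sum.inl Sum.inl) '' S) +
      matLen F ((·.submatrix Sum.inr Sum.inr) '' S) + 1 :=
  matLen_le_matLen_image_add_matLen_image_add_one (B := blockTriangularSubalgebra F F _) hS
    (f₁ := submatrixLinearMap F Sum.inl Sum.inl) (submatrix_one _ Sum.inl_injective)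
    (fun _ _ _ hy => BlockTriangular.submatrix_inl_mul hy)
    (f₂ := submatrixLinearMap F Sum.inr Sum.inr) (submatrix_one _ Sum.inr_injective)
    (fun _ hx _ _ => BlockTriangular.submatrix_inr_mul hx)
    fun _ hx _ hy => BlockTriangular.mul_eq_zero hx hy

open Matrix in
/-- Lemma of Markova: for a block upper-triangular matrix algebra `𝒜`,
`ℓ(𝒜) ≤ ℓ(𝒜₁) + ℓ(𝒜₂) + 1` where `𝒜₁, 𝒜₂` are the algebras of diagonal blocks. -/
theorem stmt_15 {F : Type*} [Field F] {p q : ℕ}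
    (𝒜 : Subalgebra F (Matrix (Fin p ⊕ Fin q) (Fin p ⊕ Fin q) F))
    (hblock : ∀ A ∈ 𝒜, ∀ (i : Fin q) (j : Fin p), A (Sum.inr i) (Sum.inl j) = 0) :
    algLen F (𝒜 : Set (Matrix (Fin p ⊕ Fin q) (Fin p ⊕ Fin q) F)) ≤
      algLen F ((fun A : Matrix (Fin p ⊕ Fin q) (Fin p ⊕ Fin q) F =>
          A.submatrix Sum.inl Sum.inl) '' 𝒜) +
        algLen F ((fun A : Matrix (Fin p ⊕ Fin q) (Fin p ⊕ Fin q) F =>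
          A.submatrix Sum.inr Sum.inr) '' 𝒜) + 1 := by
  refine algLen_le fun S hS => ?_
  have hSB : ∀ M ∈ S, M.BlockTriangular Sum.isRight := fun s hs =>
    blockTriangular_isRight_iff.2 (hblock s (SetLike.coe_injective hS ▸ Algebra.subset_adjoin hs))
  refine (matLen_le_of_blockTriangular hSB).trans ?_
  gcongr <;> apply matLen_le_algLen
  · exact (adjoin_image (B := blockTriangularSubalgebra F F _)
      (f := submatrixLinearMap F Sum.inl Sum.inl) hSB (submatrix_one _ Sum.inl_injective)
      fun _ _ _ hy => BlockTriangular.submatrix_inl_mul hy).trans (congrArg _ hS)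
  · exact (adjoin_image (B := blockTriangularSubalgebra F F _)
      (f := submatrixLinearMap F Sum.inr Sum.inr) hSB (submatrix_one _ Sum.inr_injective)
      fun _ hx _ _ => BlockTriangular.submatrix_inr_mul hx).trans (congrArg _ hS)
end
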